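/- Let d, p be positive integers, let Γ₁ = diag(λ₁,…,λ_d) and Γ₂ = diag(μ₁,…,μ_d) be real diagonal d×d matrices with 0 < λ_j < μ_j for each j, and let B be a real p×d matrix. Let Γ = diag(Γ₁, Γ₂) ∈ ℝ^{2d×2d}, C = [B B] ∈ ℝ^{p×2d}, and let M ∈ ℝ^{2d×2d} be the symmetric block matrix with blocks M¹¹ = ½Γ₁Γ₂²(Γ₁−Γ₂)^{−2}, M¹² = M²¹ = −Γ₁Γ₂³(Γ₁+Γ₂)^{−1}(Γ₁−Γ₂)^{−2}, M²² = ½Γ₂³(Γ₁−Γ₂)^{−2}. Then the first order effective damping constant vanishes: C Γ^{−1} M Cᵀ = 0. -/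

import Mathlib

/-!
Every block of `Γ` and `M` is diagonal, so `C Γ⁻¹ M Cᵀ = B D Bᵀ` where `D` is the diagonal matrix
of sums of the four blocks of `Γ⁻¹ M`. With `a = λⱼ`, `b = μⱼ` and `x = (a - b)⁻¹`, its `j`-th
entry is `b² x² / 2 - a b² x² / (a + b) - b³ x² / (a + b) + b² x² / 2 = b² x² - b² x² = 0`.
-/

open Matrix

section Diagonal

variable {K : Type*} [Field K] {n : Type*} [Fintype n] [DecidableEq n]

theorem inv_diagonal_of_ne_zero {v : n → K} (hv : ∀ i, v i ≠ 0) :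
    (diagonal v)⁻¹ = diagonal v⁻¹ := by
  refine inv_eq_right_inv ?_
  rw [diagonal_mul_diagonal, ← diagonal_one]
  exact congrArg diagonal (funext fun i => mul_inv_cancel₀ (hv i))

theorem inv_fromBlocks_diagonal {u v : n → K} (hu : ∀ i, u i ≠ 0) (hv : ∀ i, v i ≠ 0) :
    (fromBlocks (diagonal u) 0 0 (diagonal v))⁻¹ =
      fromBlocks (diagonal u⁻¹) 0 0 (diagonal v⁻¹) := by
  rw [fromBlocks_diagonal, fromBlocks_diagonal, Sum.elim_inv_inv]
  exact inv_diagonal_of_ne_zero (Sum.forall.2 ⟨hu, hv⟩)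

noncomputable def gramian (Γ₁ Γ₂ : Matrix n n K) : Matrix (n ⊕ n) (n ⊕ n) K :=
  fromBlocks
    ((1 / 2 : K) • (Γ₁ * Γ₂ ^ 2 * ((Γ₁ - Γ₂)⁻¹) ^ 2))
    (-(Γ₁ * Γ₂ ^ 3 * (Γ₁ + Γ₂)⁻¹ * ((Γ₁ - Γ₂)⁻¹) ^ 2))
    (-(Γ₁ * Γ₂ ^ 3 * (Γ₁ + Γ₂)⁻¹ * ((Γ₁ - Γ₂)⁻¹) ^ 2))
    ((1 / 2 : K) • (Γ₂ ^ 3 * ((Γ₁ - Γ₂)⁻¹) ^ 2))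

theorem gramian_scalar_blockSum_eq_zero [NeZero (2 : K)] {a b x : K} (ha : a ≠ 0)
    (hab : a + b ≠ 0) :
    a⁻¹ * (1 / 2 * (a * b ^ 2 * x ^ 2)) + b⁻¹ * -(a * b ^ 3 * (a + b)⁻¹ * x ^ 2) +
      (a⁻¹ * -(a * b ^ 3 * (a + b)⁻¹ * x ^ 2) + b⁻¹ * (1 / 2 * (b ^ 3 * x ^ 2))) = 0 := by
  field_simp
  ring

theorem fromCols_one_one_mul_inv_mul_gramian_mul_transpose_eq_zero [NeZero (2 : K)]
    {lam mu : n → K} (hlam : ∀ j, lam j ≠ 0) (hmu : ∀ j, mu j ≠ 0)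
    (hsum : ∀ j, lam j + mu j ≠ 0) (hne : ∀ j, lam j ≠ mu j) :
    fromCols (1 : Matrix n n K) (1 : Matrix n n K) *
        ((fromBlocks (diagonal lam) 0 0 (diagonal mu))⁻¹ * gramian (diagonal lam) (diagonal mu)) *
        (fromCols (1 : Matrix n n K) (1 : Matrix n n K))ᵀ = 0 := by
  have hsub : ∀ j, lam j - mu j ≠ 0 := fun j => sub_ne_zero.2 (hne j)
  rw [← Matrix.mul_assoc, gramian, inv_fromBlocks_diagonal hlam hmu, diagonal_sub, diagonal_add,
    inv_diagonal_of_ne_zero hsum, inv_diagonal_of_ne_zero hsub, transpose_fromCols,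
    fromCols_mul_fromBlocks, fromCols_mul_fromBlocks, fromCols_mul_fromRows]
  simp only [diagonal_pow, diagonal_mul_diagonal, ← diagonal_smul, diagonal_neg, diagonal_add,
    transpose_one, Matrix.one_mul, Matrix.mul_one, Matrix.mul_zero, add_zero, zero_add]
  rw [← diagonal_zero]
  congr 1
  funext j
  simp only [Pi.inv_apply, Pi.pow_apply, Pi.smul_apply, smul_eq_mul]
  exact gramian_scalar_blockSum_eq_zero (hlam j) (hsum j)

end Diagonal

theorem fromCols_self_mul_mul_transpose {R : Type*} [CommSemiring R] {m n : Type*} [Fintype n]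
    [DecidableEq n] (B : Matrix m n R) (X : Matrix (n ⊕ n) (n ⊕ n) R) :
    fromCols B B * X * (fromCols B B)ᵀ =
      B * (fromCols (1 : Matrix n n R) (1 : Matrix n n R) * X *
        (fromCols (1 : Matrix n n R) (1 : Matrix n n R))ᵀ) * Bᵀ := by
  have hB : fromCols B B = B * fromCols (1 : Matrix n n R) (1 : Matrix n n R) := by
    rw [Matrix.mul_fromCols, Matrix.mul_one]
  rw [hB, transpose_mul]
  simp only [Matrix.mul_assoc]

/-- Vanishing of the first order effective damping constant for the
realization `(Γ, M, C)` with `Γ = diag(Γ₁,Γ₂)`, `C = [B B]` and the Gramian `M`: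
`C Γ⁻¹ M Cᵀ = 0`. -/
theorem vanishing_effective_damping
    (d p : ℕ) (lam mu : Fin d → ℝ)
    (hpos : ∀ j, 0 < lam j) (hlt : ∀ j, lam j < mu j)
    (B : Matrix (Fin p) (Fin d) ℝ)
    (Γ₁ Γ₂ : Matrix (Fin d) (Fin d) ℝ)
    (hΓ₁ : Γ₁ = Matrix.diagonal lam) (hΓ₂ : Γ₂ = Matrix.diagonal mu)
    (Γ : Matrix (Fin d ⊕ Fin d) (Fin d ⊕ Fin d) ℝ)
    (hΓ : Γ = Matrix.fromBlocks Γ₁ 0 0 Γ₂)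
    (C : Matrix (Fin p) (Fin d ⊕ Fin d) ℝ)
    (hC : C = Matrix.fromCols B B)
    (M : Matrix (Fin d ⊕ Fin d) (Fin d ⊕ Fin d) ℝ)
    (hM : M = Matrix.fromBlocks
      ((1 / 2 : ℝ) • (Γ₁ * Γ₂ ^ 2 * ((Γ₁ - Γ₂)⁻¹) ^ 2))
      (-(Γ₁ * Γ₂ ^ 3 * (Γ₁ + Γ₂)⁻¹ * ((Γ₁ - Γ₂)⁻¹) ^ 2))
      (-(Γ₁ * Γ₂ ^ 3 * (Γ₁ + Γ₂)⁻¹ * ((Γ₁ - Γ₂)⁻¹) ^ 2))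
      ((1 / 2 : ℝ) • (Γ₂ ^ 3 * ((Γ₁ - Γ₂)⁻¹) ^ 2))) :
    C * Γ⁻¹ * M * Cᵀ = 0 := by
  subst hΓ₁ hΓ₂ hΓ hC
  obtain rfl : M = gramian (diagonal lam) (diagonal mu) := hM
  have hmu : ∀ j, 0 < mu j := fun j => (hpos j).trans (hlt j)
  rw [Matrix.mul_assoc (fromCols B B), fromCols_self_mul_mul_transpose,
    fromCols_one_one_mul_inv_mul_gramian_mul_transpose_eq_zero (fun j => (hpos j).ne')
      (fun j => (hmu j).ne') (fun j => (add_pos (hpos j) (hmu j)).ne') (fun j => (hlt j).ne),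
    Matrix.mul_zero, Matrix.zero_mul]
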